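/- Let V be a finite-dimensional real inner product space, μ ∈ V, U a subspace of V, and r = P_U μ − μ the residual of orthogonal projection. Let v ∈ V with ⟨v, r⟩ ≠ 0, and let U' = U + span{v}. Then ‖μ − P_{U'} μ‖² ≤ ‖μ − P_U μ‖² − ⟨v, r⟩² / ‖v‖². -/

import Mathlib

/-!
Write `s = μ - P_U μ ∈ Uᗮ` and let `b = v - P_U v ∈ Uᗮ` be the component of `v` orthogonal
to `U`, so that `⟪b, s⟫ = ⟪v, s⟫` and `‖b‖ ≤ ‖v‖`. The point `P_U μ + (⟪b, s⟫ / ‖b‖²) • b`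
lies in `U ⊔ span {v}` and is at squared distance `‖s‖² - ⟪v, s⟫² / ‖b‖²` from `μ`; since the
projection onto `U ⊔ span {v}` is the closest point of that subspace, the bound follows.
-/

open RealInnerProductSpace

namespace Submodule

theorem norm_sub_starProjection_le_of_mem {𝕜 E : Type*} [RCLike 𝕜] [NormedAddCommGroup E]
    [InnerProductSpace 𝕜 E] {K : Submodule 𝕜 E} [K.HasOrthogonalProjection] (x : E) {w : E}
    (hw : w ∈ K) : ‖x - K.starProjection x‖ ≤ ‖x - w‖ := by
  rw [starProjection_minimal]
  exact ciInf_le ⟨0, Set.forall_mem_range.2 fun _ => norm_nonneg _⟩ (⟨w, hw⟩ : K)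

end Submodule

section Real

variable {E : Type*} [NormedAddCommGroup E] [InnerProductSpace ℝ E]

theorem norm_sub_inner_div_smul_sq (s b : E) :
    ‖s - (⟪b, s⟫ / ‖b‖ ^ 2) • b‖ ^ 2 = ‖s‖ ^ 2 - ⟪b, s⟫ ^ 2 / ‖b‖ ^ 2 := by
  rcases eq_or_ne b 0 with rfl | hb
  · simp
  rw [norm_sub_sq_real, real_inner_smul_right, norm_smul, mul_pow, Real.norm_eq_abs, sq_abs,
    real_inner_comm]
  field_simp
  ring

theorem inner_sq_div_norm_sq_le_of_norm_le {b v : E} (s : E) (hbv : ‖b‖ ≤ ‖v‖) :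
    ⟪b, s⟫ ^ 2 / ‖v‖ ^ 2 ≤ ⟪b, s⟫ ^ 2 / ‖b‖ ^ 2 := by
  rcases eq_or_ne b 0 with rfl | hb
  · simp
  gcongr

theorem norm_sub_starProjection_sup_span_sq_le (μ v : E) (U : Submodule ℝ E)
    [U.HasOrthogonalProjection] [(U ⊔ ℝ ∙ v).HasOrthogonalProjection] :
    ‖μ - (U ⊔ ℝ ∙ v).starProjection μ‖ ^ 2 ≤
      ‖μ - U.starProjection μ‖ ^ 2 - ⟪v, μ - U.starProjection μ⟫ ^ 2 / ‖v‖ ^ 2 := by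
  set s := μ - U.starProjection μ
  set b := Uᗮ.starProjection v
  have hs : s ∈ Uᗮ := U.sub_starProjection_mem_orthogonal μ
  have hb : b = v - U.starProjection v := U.starProjection_orthogonal_val v
  have hbs : ⟪b, s⟫ = ⟪v, s⟫ := by
    rw [hb, inner_sub_left, (Submodule.mem_orthogonal U s).1 hs _ (U.starProjection_apply_mem v),
      sub_zero]
  set w := U.starProjection μ + (⟪b, s⟫ / ‖b‖ ^ 2) • b
  have hw : w ∈ U ⊔ ℝ ∙ v := by
    refine add_mem (Submodule.mem_sup_left (U.starProjection_apply_mem μ))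
      (Submodule.smul_mem _ _ ?_)
    rw [hb]
    exact sub_mem (Submodule.mem_sup_right (Submodule.mem_span_singleton_self v))
      (Submodule.mem_sup_left (U.starProjection_apply_mem v))
  have hμw : μ - w = s - (⟪b, s⟫ / ‖b‖ ^ 2) • b := by simp only [w, s]; abel
  calc ‖μ - (U ⊔ ℝ ∙ v).starProjection μ‖ ^ 2
      ≤ ‖μ - w‖ ^ 2 := by gcongr; exact Submodule.norm_sub_starProjection_le_of_mem μ hw
    _ = ‖s‖ ^ 2 - ⟪b, s⟫ ^ 2 / ‖b‖ ^ 2 := by rw [hμw, norm_sub_inner_div_smul_sq]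
    _ ≤ ‖s‖ ^ 2 - ⟪b, s⟫ ^ 2 / ‖v‖ ^ 2 := by
      gcongr ‖s‖ ^ 2 - ?_
      exact inner_sq_div_norm_sq_le_of_norm_le s (Uᗮ.norm_starProjection_apply_le v)
    _ = ‖s‖ ^ 2 - ⟪v, s⟫ ^ 2 / ‖v‖ ^ 2 := by rw [hbs]

end Real

theorem stmt_7_general {V : Type*} [NormedAddCommGroup V] [InnerProductSpace ℝ V]
    [FiniteDimensional ℝ V] (μ : V) (U : Submodule ℝ V)
    (r : V) (hr : r = (Submodule.orthogonalProjectionOnto U μ : V) - μ)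
    (v : V) :
    ‖μ - (Submodule.orthogonalProjectionOnto (U ⊔ Submodule.span ℝ {v}) μ : V)‖ ^ 2 ≤
      ‖μ - (Submodule.orthogonalProjectionOnto U μ : V)‖ ^ 2 - ⟪v, r⟫ ^ 2 / ‖v‖ ^ 2 := by
  have hr' : ⟪v, r⟫ ^ 2 = ⟪v, μ - U.starProjection μ⟫ ^ 2 := by
    rw [hr, ← Submodule.starProjection_apply, ← neg_sub, inner_neg_right, neg_sq]
  simpa only [← Submodule.starProjection_apply, hr'] using
    norm_sub_starProjection_sup_span_sq_le μ v U

/-- Adding a direction correlated with the residual decreases the squared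
reconstruction error by at least ⟪v,r⟫² / ‖v‖². -/
theorem stmt_7 {V : Type*} [NormedAddCommGroup V] [InnerProductSpace ℝ V]
    [FiniteDimensional ℝ V] (μ : V) (U : Submodule ℝ V)
    (r : V) (hr : r = (Submodule.orthogonalProjectionOnto U μ : V) - μ)
    (v : V) (hv : ⟪v, r⟫ ≠ 0) :
    ‖μ - (Submodule.orthogonalProjectionOnto (U ⊔ Submodule.span ℝ {v}) μ : V)‖ ^ 2 ≤
      ‖μ - (Submodule.orthogonalProjectionOnto U μ : V)‖ ^ 2 - ⟪v, r⟫ ^ 2 / ‖v‖ ^ 2 :=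
  stmt_7_general μ U r hr v
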